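/- Let h ∈ ℝ^p, and suppose {1,…,p} is partitioned into blocks T₁,…,T_q each of size at most t, where T₂ contains the t largest (in absolute value) entries of h outside T₁, T₃ the next t largest, and so on. Then ∑_{i=3}^q ‖h_{T_i}‖₂ ≤ ‖h_{T₁^c}‖₁ / √t. -/

import Mathlib

open Finset Real

/-!
An entry of `h` on `T i` is at most the average `‖h_{T (i-1)}‖₁ / t`, so the `t` or fewer
entries of `T i` give `‖h_{T i}‖₂ ≤ ‖h_{T (i-1)}‖₁ / √t`. Summing over `i ≥ 3`, the blocks
`T 2, …, T (q-1)` are disjoint and lie outside `T 1`.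
-/

theorem sqrt_sum_sq_le_div_sqrt {ι : Type*} {s : Finset ι} {f : ι → ℝ} {t S : ℝ}
    (hS : 0 ≤ S) (hcard : (s.card : ℝ) ≤ t) (hle : ∀ j ∈ s, |f j| * t ≤ S) :
    √(∑ j ∈ s, f j ^ 2) ≤ S / √t := by
  rcases (Nat.cast_nonneg _ |>.trans hcard).eq_or_lt with rfl | ht
  · have : s = ∅ := card_eq_zero.mp (by exact_mod_cast hcard.antisymm (Nat.cast_nonneg _))
    simp [this]
  have hterm : ∀ j ∈ s, f j ^ 2 ≤ (S / t) ^ 2 := fun j hj => by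
    rw [← sq_abs]
    exact pow_le_pow_left₀ (abs_nonneg _) ((le_div_iff₀ ht).mpr (hle j hj)) 2
  have hsum : ∑ j ∈ s, f j ^ 2 ≤ S ^ 2 / t :=
    calc ∑ j ∈ s, f j ^ 2 ≤ s.card * (S / t) ^ 2 := by
          simpa [nsmul_eq_mul] using sum_le_card_nsmul s _ _ hterm
      _ ≤ t * (S / t) ^ 2 := by gcongr
      _ = S ^ 2 / t := by field_simp
  calc √(∑ j ∈ s, f j ^ 2) ≤ √(S ^ 2 / t) := sqrt_le_sqrt hsum
    _ = S / √t := by rw [sqrt_div (sq_nonneg S), sqrt_sq hS]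

theorem sum_sum_le_sum_of_pairwiseDisjoint {ι α : Type*} [DecidableEq α] {I : Finset ι}
    {U : ι → Finset α} {s : Finset α} {f : α → ℝ} (hdisj : (I : Set ι).PairwiseDisjoint U)
    (hsub : ∀ i ∈ I, U i ⊆ s) (hf : ∀ k ∈ s, 0 ≤ f k) :
    ∑ i ∈ I, ∑ k ∈ U i, f k ≤ ∑ k ∈ s, f k := by
  rw [← sum_biUnion hdisj]
  exact sum_le_sum_of_subset_of_nonneg (biUnion_subset.mpr hsub) fun k hk _ => hf k hk

theorem block_l2_sum_bound_general {p : ℕ} (h : Fin p → ℝ) (q t : ℕ)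
    (T : ℕ → Finset (Fin p))
    (hdisj : ∀ i ∈ Finset.Icc 1 q, ∀ j ∈ Finset.Icc 1 q, i ≠ j → Disjoint (T i) (T j))
    (hcard : ∀ i ∈ Finset.Icc 1 q, (T i).card ≤ t)
    (horder : ∀ i ∈ Finset.Icc 3 q, ∀ j ∈ T i,
        |h j| * t ≤ ∑ k ∈ T (i - 1), |h k|) :
    ∑ i ∈ Finset.Icc 3 q, Real.sqrt (∑ j ∈ T i, (h j) ^ 2) ≤
      (∑ j ∈ (T 1)ᶜ, |h j|) / Real.sqrt t := by
  have hprev_disj : ((Icc 3 q : Finset ℕ) : Set ℕ).PairwiseDisjoint (fun i => T (i - 1)) :=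
    fun i hi j hj hij => by
      simp only [coe_Icc, Set.mem_Icc] at hi hj
      exact hdisj _ (by simp; omega) _ (by simp; omega) (by omega)
  have hprev_sub : ∀ i ∈ Icc 3 q, T (i - 1) ⊆ (T 1)ᶜ := fun i hi => by
    simp only [mem_Icc] at hi
    exact subset_compl_iff_disjoint_right.mpr (hdisj _ (by simp; omega) _ (by simp; omega) (by omega))
  calc ∑ i ∈ Icc 3 q, √(∑ j ∈ T i, h j ^ 2)
      ≤ ∑ i ∈ Icc 3 q, (∑ k ∈ T (i - 1), |h k|) / √t :=
        sum_le_sum fun i hi => sqrt_sum_sq_le_div_sqrt (sum_nonneg fun _ _ => abs_nonneg _)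
          (by exact_mod_cast hcard i (by simp at hi ⊢; omega)) (horder i hi)
    _ ≤ (∑ j ∈ (T 1)ᶜ, |h j|) / √t := by
        rw [← sum_div]
        gcongr
        exact sum_sum_le_sum_of_pairwiseDisjoint hprev_disj hprev_sub fun _ _ => abs_nonneg _

/-- Block decomposition bound: if `{1,…,p}` is partitioned into blocks `T 1, …, T q`
of size at most `t`, where for `i ≥ 3` every entry of `h` on `T i` is bounded in
absolute value by the average absolute value of `h` on `T (i−1)`, then
`∑_{i=3}^q ‖h_{T i}‖₂ ≤ ‖h_{(T 1)ᶜ}‖₁ / √t`. -/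
theorem block_l2_sum_bound {p : ℕ} (h : Fin p → ℝ) (q t : ℕ) (ht : 0 < t)
    (T : ℕ → Finset (Fin p))
    (hdisj : ∀ i ∈ Finset.Icc 1 q, ∀ j ∈ Finset.Icc 1 q, i ≠ j → Disjoint (T i) (T j))
    (hcover : (Finset.Icc 1 q).biUnion T = Finset.univ)
    (hcard : ∀ i ∈ Finset.Icc 1 q, (T i).card ≤ t)
    (horder : ∀ i ∈ Finset.Icc 3 q, ∀ j ∈ T i,
        |h j| * t ≤ ∑ k ∈ T (i - 1), |h k|) :
    ∑ i ∈ Finset.Icc 3 q, Real.sqrt (∑ j ∈ T i, (h j) ^ 2) ≤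
      (∑ j ∈ (T 1)ᶜ, |h j|) / Real.sqrt t :=
  block_l2_sum_bound_general h q t T hdisj hcard horder
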